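/- Discretization error for the large-item profit function: if every optimal solution of the large-item knapsack subproblem contains at most z items, and X is a grid with mesh δ_X, then for every budget ω and cardinality k ≤ z, |φ^X_L(ω,k) − φ_L(ω,k)| ≤ (z+1)·δ_X, where φ^X_L and φ_L are the discretized and exact profit functions. Consequently, a uniform grid X on an interval of length OPT needs |X| = Ω(z/ε) points to guarantee error O(ε·OPT). -/

import Mathlib

/-- The inverse weight function `φ_T(p,k)`. -/
noncomputable def invWeight {α : Type*} (w p : α → ℝ) (T : Finset α) (pr : ℝ) (k : ℕ) :
    ENNReal :=
  sInf {x | ∃ T' ⊆ T, pr ≤ ∑ e ∈ T', p e ∧ T'.card ≤ k ∧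
    x = ENNReal.ofReal (∑ e ∈ T', w e)}

/-- The discretized inverse weight function of a list of classes, obtained by iterated
convolution with all partial-profit arguments restricted to the grid `X`. -/
noncomputable def phiList {α : Type*} (w p : α → ℝ) (X : Finset ℝ) :
    List (Finset α) → ℝ → ℕ → ENNReal
  | [] => fun pr k => invWeight w p (∅ : Finset α) pr k
  | S :: rest => fun pr k =>
      sInf {x | ∃ p₁ ∈ X, ∃ p₂ ∈ X, ∃ k₁ k₂ : ℕ, k₁ + k₂ ≤ k ∧ pr ≤ p₁ + p₂ ∧
        x = invWeight w p S p₁ k₁ + phiList w p X rest p₂ k₂}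

/-- The (exact) profit function of the large item set. -/
noncomputable def profitFn {α : Type*} (w p : α → ℝ) (S : Finset α) (ω : ℝ) (k : ℕ) : ℝ :=
  sSup {x : ℝ | ∃ T' ⊆ S, ∑ e ∈ T', w e ≤ ω ∧ T'.card ≤ k ∧ x = ∑ e ∈ T', p e}

/-- The discretized profit function of the large item set for partition `classes`. -/
noncomputable def profitFnX {α : Type*} (w p : α → ℝ) (X : Finset ℝ)
    (classes : List (Finset α)) (ω : ℝ) (k : ℕ) : ℝ :=
  sSup {x : ℝ | x ∈ X ∧ phiList w p X classes x k ≤ ENNReal.ofReal ω}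

section Aux
set_option linter.unusedSectionVars false
set_option linter.unusedVariables false

variable {α : Type*} [DecidableEq α] (w p : α → ℝ) (X : Finset ℝ)

lemma invWeight_set_finite (T : Finset α) (pr : ℝ) (k : ℕ) :
    {x | ∃ T' ⊆ T, pr ≤ ∑ e ∈ T', p e ∧ T'.card ≤ k ∧
      x = ENNReal.ofReal (∑ e ∈ T', w e)}.Finite := by
  apply Set.Finite.subset
    (Set.Finite.image (fun T' : Finset α => ENNReal.ofReal (∑ e ∈ T', w e))
      T.powerset.finite_toSet)
  rintro x ⟨T', hT', -, -, rfl⟩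
  exact ⟨T', by simpa [Finset.mem_powerset] using hT', rfl⟩

lemma invWeight_anti (T : Finset α) (pr : ℝ) {k k' : ℕ} (hk : k ≤ k') :
    invWeight w p T pr k' ≤ invWeight w p T pr k := by
  apply sInf_le_sInf
  rintro x ⟨T', h1, h2, h3, h4⟩
  exact ⟨T', h1, h2, h3.trans hk, h4⟩

lemma phiList_anti (cs : List (Finset α)) (pr : ℝ) {k k' : ℕ} (hk : k ≤ k') :
    phiList w p X cs pr k' ≤ phiList w p X cs pr k := by
  cases cs with
  | nil => exact invWeight_anti w p _ pr hk
  | cons C rest =>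
    apply sInf_le_sInf
    rintro x ⟨p₁, h₁, p₂, h₂, k₁, k₂, hkk, hpr, rfl⟩
    exact ⟨p₁, h₁, p₂, h₂, k₁, k₂, hkk.trans hk, hpr, rfl⟩

lemma invWeight_sound (T : Finset α) (pr : ℝ) (k : ℕ)
    (h : invWeight w p T pr k ≠ ⊤) :
    ∃ T' ⊆ T, pr ≤ ∑ e ∈ T', p e ∧ T'.card ≤ k ∧
      ENNReal.ofReal (∑ e ∈ T', w e) ≤ invWeight w p T pr k := by
  have hfin := invWeight_set_finite w p T pr k
  have hne : {x | ∃ T' ⊆ T, pr ≤ ∑ e ∈ T', p e ∧ T'.card ≤ k ∧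
      x = ENNReal.ofReal (∑ e ∈ T', w e)}.Nonempty := by
    rw [Set.nonempty_iff_ne_empty]
    intro he
    exact h (by rw [invWeight, he, sInf_empty])
  obtain ⟨T', h1, h2, h3, h4⟩ := hne.csInf_mem hfin
  exact ⟨T', h1, h2, h3, le_of_eq h4.symm⟩

lemma phiList_cons_set_finite (C : Finset α) (rest : List (Finset α)) (pr : ℝ) (k : ℕ) :
    {x | ∃ p₁ ∈ X, ∃ p₂ ∈ X, ∃ k₁ k₂ : ℕ, k₁ + k₂ ≤ k ∧ pr ≤ p₁ + p₂ ∧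
        x = invWeight w p C p₁ k₁ + phiList w p X rest p₂ k₂}.Finite := by
  apply Set.Finite.subset
    (Set.Finite.image
      (fun q : ℝ × ℝ × ℕ × ℕ => invWeight w p C q.1 q.2.2.1 + phiList w p X rest q.2.1 q.2.2.2)
      ((X.finite_toSet.prod (X.finite_toSet.prod ((Set.finite_Iic k).prod (Set.finite_Iic k))))))
  rintro x ⟨p₁, h₁, p₂, h₂, k₁, k₂, hkk, -, rfl⟩
  refine ⟨(p₁, p₂, k₁, k₂), ?_, rfl⟩
  refine ⟨h₁, h₂, ?_, ?_⟩ <;> simp only [Set.mem_Iic] <;> omega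

lemma phiList_sound (hw : ∀ e, 0 ≤ w e) :
    ∀ cs : List (Finset α), cs.Pairwise Disjoint → ∀ pr : ℝ, ∀ k : ℕ,
    phiList w p X cs pr k ≠ ⊤ →
    ∃ T' : Finset α, (∀ e ∈ T', ∃ C ∈ cs, e ∈ C) ∧ pr ≤ ∑ e ∈ T', p e ∧ T'.card ≤ k ∧
      ENNReal.ofReal (∑ e ∈ T', w e) ≤ phiList w p X cs pr k := by
  intro cs
  induction cs with
  | nil =>
    intro _ pr k h
    obtain ⟨T', h1, h2, h3, h4⟩ := invWeight_sound w p ∅ pr k h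
    refine ⟨T', ?_, h2, h3, h4⟩
    intro e he
    exact absurd (h1 he) (by simp)
  | cons C rest ih =>
    intro hpw pr k h
    rw [List.pairwise_cons] at hpw
    have hfin := phiList_cons_set_finite w p X C rest pr k
    have hne : {x | ∃ p₁ ∈ X, ∃ p₂ ∈ X, ∃ k₁ k₂ : ℕ, k₁ + k₂ ≤ k ∧ pr ≤ p₁ + p₂ ∧
        x = invWeight w p C p₁ k₁ + phiList w p X rest p₂ k₂}.Nonempty := by
      rw [Set.nonempty_iff_ne_empty]
      intro he
      exact h (by simp only [phiList]; rw [he, sInf_empty])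
    have hmem := hne.csInf_mem hfin
    obtain ⟨p₁, hp₁, p₂, hp₂, k₁, k₂, hkk, hpr, heq⟩ := hmem
    have hval : phiList w p X (C :: rest) pr k =
        invWeight w p C p₁ k₁ + phiList w p X rest p₂ k₂ := heq
    have h₁top : invWeight w p C p₁ k₁ ≠ ⊤ := by
      intro ht; rw [hval, ht] at h; simp at h
    have h₂top : phiList w p X rest p₂ k₂ ≠ ⊤ := by
      intro ht; rw [hval, ht] at h; simp at h
    obtain ⟨T₀, hT₀C, hT₀p, hT₀c, hT₀w⟩ := invWeight_sound w p C p₁ k₁ h₁top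
    obtain ⟨T₁, hT₁C, hT₁p, hT₁c, hT₁w⟩ := ih hpw.2 p₂ k₂ h₂top
    have hdisj : Disjoint T₀ T₁ := by
      rw [Finset.disjoint_left]
      intro e he₀ he₁
      obtain ⟨C', hC', heC'⟩ := hT₁C e he₁
      exact Finset.disjoint_left.mp (hpw.1 C' hC') (hT₀C he₀) heC'
    refine ⟨T₀ ∪ T₁, ?_, ?_, ?_, ?_⟩
    · intro e he
      rcases Finset.mem_union.mp he with h' | h'
      · exact ⟨C, List.mem_cons_self, hT₀C h'⟩
      · obtain ⟨C', hC', heC'⟩ := hT₁C e h'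
        exact ⟨C', List.mem_cons_of_mem _ hC', heC'⟩
    · rw [Finset.sum_union hdisj]
      linarith
    · rw [Finset.card_union_of_disjoint hdisj]
      omega
    · rw [Finset.sum_union hdisj, hval,
        ENNReal.ofReal_add (Finset.sum_nonneg fun e _ => hw e)
          (Finset.sum_nonneg fun e _ => hw e)]
      exact add_le_add hT₀w hT₁w

lemma phiList_complete (hw : ∀ e, 0 ≤ w e) (hp : ∀ e, 0 ≤ p e)
    {OPT δ : ℝ} (hδ : 0 ≤ δ)
    (hX0 : (0 : ℝ) ∈ X)
    (hmesh : ∀ x : ℝ, 0 ≤ x → x ≤ OPT → ∃ y ∈ X, y ≤ x ∧ x - y ≤ δ)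
    (hclosed : ∀ y₁ ∈ X, ∀ y₂ ∈ X, y₁ + y₂ ≤ OPT → y₁ + y₂ ∈ X) :
    ∀ cs : List (Finset α), ∀ T : Finset α,
      (∀ e ∈ T, ∃ C ∈ cs, e ∈ C) → ∑ e ∈ T, p e ≤ OPT →
      ∃ x ∈ X, ∑ e ∈ T, p e - T.card * δ ≤ x ∧ x ≤ ∑ e ∈ T, p e ∧
        phiList w p X cs x T.card ≤ ENNReal.ofReal (∑ e ∈ T, w e) := by
  intro cs
  induction cs with
  | nil =>
    intro T hT _
    have hTe : T = ∅ := by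
      rw [Finset.eq_empty_iff_forall_notMem]
      intro e he
      obtain ⟨C, hC, -⟩ := hT e he
      simp at hC
    subst hTe
    refine ⟨0, hX0, by simp, by simp, ?_⟩
    simp only [phiList, Finset.sum_empty, Finset.card_empty]
    exact sInf_le ⟨∅, Finset.empty_subset _, by simp⟩
  | cons C rest ih =>
    intro T hT hTOPT
    set T₀ := T ∩ C with hT₀def
    set T₁ := T \ C with hT₁def
    have hunion : T₀ ∪ T₁ = T := by
      rw [hT₀def, hT₁def, Finset.union_comm]
      exact Finset.sdiff_union_inter T C
    have hdisj : Disjoint T₀ T₁ := (Finset.disjoint_sdiff_inter T C).symm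
    have hsubC : T₀ ⊆ C := Finset.inter_subset_right
    have hT₁rest : ∀ e ∈ T₁, ∃ C' ∈ rest, e ∈ C' := by
      intro e he
      have heT : e ∈ T := (Finset.mem_sdiff.mp he).1
      have heC : e ∉ C := (Finset.mem_sdiff.mp he).2
      obtain ⟨C', hC', heC'⟩ := hT e heT
      rcases List.mem_cons.mp hC' with rfl | h'
      · exact absurd heC' heC
      · exact ⟨C', h', heC'⟩
    have hsum : ∑ e ∈ T₀, p e + ∑ e ∈ T₁, p e = ∑ e ∈ T, p e := by
      rw [← Finset.sum_union hdisj, hunion]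
    have hsumw : ∑ e ∈ T₀, w e + ∑ e ∈ T₁, w e = ∑ e ∈ T, w e := by
      rw [← Finset.sum_union hdisj, hunion]
    have hcard : T₀.card + T₁.card = T.card := by
      rw [← Finset.card_union_of_disjoint hdisj, hunion]
    have h0nonneg : (0:ℝ) ≤ ∑ e ∈ T₀, p e := Finset.sum_nonneg fun e _ => hp e
    have h1nonneg : (0:ℝ) ≤ ∑ e ∈ T₁, p e := Finset.sum_nonneg fun e _ => hp e
    have h0OPT : ∑ e ∈ T₀, p e ≤ OPT := by linarith
    have h1OPT : ∑ e ∈ T₁, p e ≤ OPT := by linarith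
    obtain ⟨p₁, hp₁X, hp₁le, hp₁loss, hp₁inv⟩ :
        ∃ p₁ ∈ X, p₁ ≤ ∑ e ∈ T₀, p e ∧ ∑ e ∈ T₀, p e - p₁ ≤ T₀.card * δ ∧
          invWeight w p C p₁ T₀.card ≤ ENNReal.ofReal (∑ e ∈ T₀, w e) := by
      by_cases hT₀e : T₀ = ∅
      · refine ⟨0, hX0, by simp [hT₀e], by simp [hT₀e], ?_⟩
        rw [invWeight]
        exact sInf_le ⟨∅, Finset.empty_subset _, by simp [hT₀e]⟩
      · obtain ⟨y, hyX, hyle, hyloss⟩ := hmesh _ h0nonneg h0OPT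
        have hc1 : (1:ℝ) ≤ T₀.card := by
          exact_mod_cast Finset.card_pos.mpr (Finset.nonempty_iff_ne_empty.mpr hT₀e)
        refine ⟨y, hyX, hyle, by nlinarith, ?_⟩
        rw [invWeight]
        exact sInf_le ⟨T₀, hsubC, hyle, le_rfl, rfl⟩
    obtain ⟨x₂, hx₂X, hx₂lo, hx₂hi, hx₂phi⟩ := ih T₁ hT₁rest h1OPT
    have hcardR : ((T.card : ℝ)) = (T₀.card : ℝ) + (T₁.card : ℝ) := by
      exact_mod_cast hcard.symm
    refine ⟨p₁ + x₂, ?_, ?_, by linarith, ?_⟩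
    · exact hclosed p₁ hp₁X x₂ hx₂X (by linarith)
    · rw [hcardR]
      nlinarith
    · calc phiList w p X (C :: rest) (p₁ + x₂) T.card
          ≤ invWeight w p C p₁ T₀.card + phiList w p X rest x₂ T₁.card := by
            simp only [phiList]
            exact sInf_le ⟨p₁, hp₁X, x₂, hx₂X, T₀.card, T₁.card, by omega, le_rfl, rfl⟩
        _ ≤ ENNReal.ofReal (∑ e ∈ T₀, w e) + ENNReal.ofReal (∑ e ∈ T₁, w e) :=
            add_le_add hp₁inv hx₂phi
        _ = ENNReal.ofReal (∑ e ∈ T, w e) := by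
            rw [← ENNReal.ofReal_add (Finset.sum_nonneg fun e _ => hw e)
              (Finset.sum_nonneg fun e _ => hw e), hsumw]

end Aux

/-- If every feasible solution of the large-item subproblem has at most `z`
items, and `X` is a grid of mesh `δ` on `[0, OPT]` (containing `0` and closed under
addition below `OPT`), then the discretized and exact profit functions differ by at most
`(z+1)·δ`. Consequently a uniform grid (mesh `δ ≥ OPT/|X|`) guaranteeing error
`(z+1)·δ ≤ ε·OPT` needs `|X| ≥ z/ε` points. -/
theorem stmt_7 {α : Type*} [DecidableEq α] (w p : α → ℝ) (L : Finset α)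
    (classes : List (Finset α)) (X : Finset ℝ)
    (ε OPT δ ω : ℝ) (z k : ℕ)
    (hw : ∀ e, 0 ≤ w e) (hp : ∀ e, 0 ≤ p e)
    (hε : 0 < ε) (hε1 : ε < 1) (hOPT : 0 < OPT) (hω : 0 ≤ ω) (hδ : 0 ≤ δ)
    (hunion : ∀ e, e ∈ L ↔ ∃ C ∈ classes, e ∈ C)
    (hpairwise : classes.Pairwise Disjoint)
    (hlarge : ∀ e ∈ L, ε * OPT ≤ p e)
    (hz : ∀ T ⊆ L, ∑ e ∈ T, w e ≤ ω → T.card ≤ k → T.card ≤ z)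
    (hprofit : ∀ T ⊆ L, ∑ e ∈ T, w e ≤ ω → T.card ≤ k → ∑ e ∈ T, p e ≤ OPT)
    (hX0 : (0 : ℝ) ∈ X) (hXb : ∀ x ∈ X, 0 ≤ x ∧ x ≤ OPT)
    (hmesh : ∀ x : ℝ, 0 ≤ x → x ≤ OPT → ∃ y ∈ X, y ≤ x ∧ x - y ≤ δ)
    (hclosed : ∀ y₁ ∈ X, ∀ y₂ ∈ X, y₁ + y₂ ≤ OPT → y₁ + y₂ ∈ X) :
    |profitFnX w p X classes ω k - profitFn w p L ω k| ≤ ((z : ℝ) + 1) * δ ∧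
    (((z : ℝ) + 1) * δ ≤ ε * OPT → OPT ≤ δ * X.card → (z : ℝ) / ε ≤ X.card) := by
  set A := {x : ℝ | ∃ T' ⊆ L, ∑ e ∈ T', w e ≤ ω ∧ T'.card ≤ k ∧ x = ∑ e ∈ T', p e} with hA
  set B := {x : ℝ | x ∈ X ∧ phiList w p X classes x k ≤ ENNReal.ofReal ω} with hB
  have hAne : A.Nonempty :=
    ⟨0, ∅, Finset.empty_subset _, by simpa using hω, by simp, by simp⟩
  have hAub : ∀ x ∈ A, x ≤ OPT := by
    rintro x ⟨T, hTL, hTw, hTc, rfl⟩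
    exact hprofit T hTL hTw hTc
  have hAbdd : BddAbove A := ⟨OPT, hAub⟩
  have hBsub : B ⊆ ↑X := fun x hx => hx.1
  have hBbdd : BddAbove B := (X.finite_toSet.subset hBsub).bddAbove
  -- B nonempty via completeness with T = ∅
  have hcomp := phiList_complete w p X hw hp hδ hX0 hmesh hclosed classes
  have hBne : B.Nonempty := by
    obtain ⟨x, hxX, hlo, hhi, hphi⟩ := hcomp ∅ (by simp) (by simpa using hOPT.le)
    refine ⟨x, hxX, ?_⟩
    calc phiList w p X classes x k ≤ phiList w p X classes x (∅ : Finset α).card :=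
          phiList_anti w p X classes x (by simp)
      _ ≤ ENNReal.ofReal (∑ e ∈ (∅ : Finset α), w e) := hphi
      _ ≤ ENNReal.ofReal ω := by simpa using ENNReal.ofReal_le_ofReal hω
  -- profitFnX ≤ profitFn
  have h1 : profitFnX w p X classes ω k ≤ profitFn w p L ω k := by
    apply csSup_le hBne
    rintro x ⟨hxX, hxphi⟩
    have hne : phiList w p X classes x k ≠ ⊤ :=
      fun ht => by rw [ht] at hxphi; exact (ENNReal.ofReal_ne_top) (top_le_iff.mp hxphi)
    obtain ⟨T, hTcls, hTp, hTc, hTw⟩ := phiList_sound w p X hw classes hpairwise x k hne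
    have hTL : T ⊆ L := fun e he => (hunion e).mpr (hTcls e he)
    have hwle : ∑ e ∈ T, w e ≤ ω := by
      have := hTw.trans hxphi
      rwa [ENNReal.ofReal_le_ofReal_iff hω] at this
    have hmemA : (∑ e ∈ T, p e) ∈ A := ⟨T, hTL, hwle, hTc, rfl⟩
    exact hTp.trans (le_csSup hAbdd hmemA)
  -- profitFn ≤ profitFnX + (z+1)δ
  have h2 : profitFn w p L ω k ≤ profitFnX w p X classes ω k + ((z : ℝ) + 1) * δ := by
    apply csSup_le hAne
    rintro x ⟨T, hTL, hTw, hTc, rfl⟩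
    have hTz : T.card ≤ z := hz T hTL hTw hTc
    have hTOPT : ∑ e ∈ T, p e ≤ OPT := hprofit T hTL hTw hTc
    obtain ⟨x, hxX, hlo, hhi, hphi⟩ :=
      hcomp T (fun e he => (hunion e).mp (hTL he)) hTOPT
    have hxB : x ∈ B := by
      refine ⟨hxX, ?_⟩
      calc phiList w p X classes x k ≤ phiList w p X classes x T.card :=
            phiList_anti w p X classes x hTc
        _ ≤ ENNReal.ofReal (∑ e ∈ T, w e) := hphi
        _ ≤ ENNReal.ofReal ω := ENNReal.ofReal_le_ofReal hTw
    have hxle : x ≤ profitFnX w p X classes ω k := le_csSup hBbdd hxB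
    have hcz : (T.card : ℝ) ≤ (z : ℝ) := by exact_mod_cast hTz
    nlinarith
  constructor
  · have hnn : 0 ≤ ((z : ℝ) + 1) * δ := by positivity
    rw [abs_le]
    constructor <;> [linarith; linarith]
  · intro h1' h2'
    have hδpos : 0 < δ := by
      rcases hδ.lt_or_eq with h | h
      · exact h
      · exfalso; rw [← h] at h2'; simp at h2'; linarith
    have hXpos : (0:ℝ) < X.card := by
      by_contra hc
      push_neg at hc
      nlinarith
    have hzle : (z : ℝ) + 1 ≤ ε * X.card := by
      have : ((z:ℝ) + 1) * δ ≤ ε * (δ * X.card) := le_trans h1' (by nlinarith)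
      calc (z:ℝ) + 1 = ((z:ℝ)+1) * δ / δ := by field_simp
        _ ≤ ε * (δ * X.card) / δ := by gcongr
        _ = ε * X.card := by field_simp
    rw [div_le_iff₀ hε]
    nlinarith
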